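/- arXiv:2104.02213 — 2 statements merged into one kernel-verified Lean document; each statement's English description precedes it below -/
import Mathlib

section
/- With dynamics f(0,u,w) = u; f(1,u,w) = 1 if u = w else 2; f(2,u,w) = 2, and the disturbance sequences w₁, w₂ (equal to 0 before step N* and of opposite parities from step N* on), any single control sequence u : ℕ → {0,1} with u^(0) = 1, applied under both w₁ and w₂ starting from x^(0) = 0, reaches state 2 at some time step in at least one of the two resulting trajectories. -/
/-- Dynamics of the PMPC counterexample: state in {0,1,2}, action and
disturbance in Bool (`false` = 0, `true` = 1). -/
def pmpcDyn (x : ℕ) (u w : Bool) : ℕ :=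
  if x = 0 then (if u then 1 else 0)
  else if x = 1 then (if u = w then 1 else 2)
  else 2

/-- Trajectory from initial state 0 under controls `u` and disturbances `w`. -/
def pmpcTraj (u w : ℕ → Bool) : ℕ → ℕ
  | 0 => 0
  | j + 1 => pmpcDyn (pmpcTraj u w j) (u j) (w j)

/-- First disturbance realization: 0 before step `Nstar`, parity of `j` afterwards. -/
def w₁ (Nstar : ℕ) (j : ℕ) : Bool := if j < Nstar then false else decide (j % 2 = 1)

/-- Second disturbance realization: 0 before step `Nstar`, opposite parity afterwards. -/
def w₂ (Nstar : ℕ) (j : ℕ) : Bool := if j < Nstar then false else decide ((j + 1) % 2 = 1)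

lemma pmpc_one_or_two (u w : ℕ → Bool) (hu : u 0 = true) :
    ∀ j, pmpcTraj u w (j + 1) = 1 ∨ pmpcTraj u w (j + 1) = 2 := by
  intro j
  induction j with
  | zero => left; simp [pmpcTraj, pmpcDyn, hu]
  | succ k ih =>
    rcases ih with h | h
    · by_cases hc : u (k+1) = w (k+1)
      · left; show pmpcDyn (pmpcTraj u w (k + 1)) _ _ = 1
        rw [h]; simp [pmpcDyn, hc]
      · right; show pmpcDyn (pmpcTraj u w (k + 1)) _ _ = 2
        rw [h]; simp [pmpcDyn, hc]
    · right; show pmpcDyn (pmpcTraj u w (k + 1)) _ _ = 2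
      rw [h]; simp [pmpcDyn]

theorem stmt3 (Nstar : ℕ) (hN : 2 ≤ Nstar) (u : ℕ → Bool) (hu : u 0 = true) :
    (∃ j : ℕ, pmpcTraj u (w₁ Nstar) j = 2) ∨ (∃ j : ℕ, pmpcTraj u (w₂ Nstar) j = 2) := by
  obtain ⟨M, rfl⟩ : ∃ M, Nstar = M + 1 := ⟨Nstar - 1, by omega⟩
  rcases pmpc_one_or_two u (w₁ (M+1)) hu M with h1 | h1
  · rcases pmpc_one_or_two u (w₂ (M+1)) hu M with h2 | h2
    · -- both trajectories at 1 at step M+1; disturbances differ at step M+1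
      have hw : w₁ (M+1) (M+1) ≠ w₂ (M+1) (M+1) := by
        simp only [w₁, w₂, lt_irrefl, if_false]
        rcases Nat.even_or_odd (M+1) with he | ho
        · simp [Nat.even_iff.mp he, Nat.succ_mod_two_eq_one_iff.mpr, Nat.even_iff.mp he]
        · have h1 := Nat.odd_iff.mp ho
          have h2 : (M + 1 + 1) % 2 = 0 := by omega
          simp [h1, h2]
      by_cases hc : u (M+1) = w₁ (M+1) (M+1)
      · right; refine ⟨M + 2, ?_⟩
        show pmpcDyn (pmpcTraj u (w₂ (M+1)) (M+1)) _ _ = 2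
        rw [h2]
        have : u (M+1) ≠ w₂ (M+1) (M+1) := by rw [hc]; exact hw
        simp [pmpcDyn, this]
      · left; refine ⟨M + 2, ?_⟩
        show pmpcDyn (pmpcTraj u (w₁ (M+1)) (M+1)) _ _ = 2
        rw [h1]; simp [pmpcDyn, hc]
    · right; exact ⟨M + 1, h2⟩
  · left; exact ⟨M + 1, h1⟩
end

section
/- Let f : ℝ → ℝ be convex, g : ℝ → ℝ be convex, and suppose x* minimizes f subject to g(x) ≤ 0 with an associated Lagrange multiplier λ* ≥ 0 (i.e., 0 ∈ ∂f(x*) + λ*∂g(x*) and λ* g(x*) = 0). Then for any penalty weight ρ > λ*, x* is also a global minimizer of the unconstrained exact-penalty objective f(x) + ρ·max(0, g(x)). -/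
/-- The convex subdifferential of `f : ℝ → ℝ` at `x`. -/
def subderiv (f : ℝ → ℝ) (x : ℝ) : Set ℝ :=
  {g | ∀ y, f x + g * (y - x) ≤ f y}

/-- Exact penalty property: if `x⋆` minimizes `f` subject to `g ≤ 0` with a KKT
multiplier `l ≥ 0`, then for any penalty weight `ρ > l`, `x⋆` also globally
minimizes the penalized objective `f + ρ·max(0, g)`. -/
theorem stmt11 (f g : ℝ → ℝ) (hf : ConvexOn ℝ Set.univ f) (hg : ConvexOn ℝ Set.univ g)
    (xstar : ℝ) (hfeas : g xstar ≤ 0)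
    (hmin : ∀ x, g x ≤ 0 → f xstar ≤ f x)
    (l : ℝ) (hl : 0 ≤ l)
    (hstat : ∃ a ∈ subderiv f xstar, ∃ b ∈ subderiv g xstar, a + l * b = 0)
    (hcomp : l * g xstar = 0)
    (ρ : ℝ) (hρ : l < ρ) :
    ∀ x : ℝ, f xstar + ρ * max 0 (g xstar) ≤ f x + ρ * max 0 (g x) := by
  obtain ⟨a, ha, b, hb, hab⟩ := hstat
  intro x
  have h1 : f xstar + a * (x - xstar) ≤ f x := ha x
  have h2 : g xstar + b * (x - xstar) ≤ g x := hb x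
  have hmax : max 0 (g xstar) = 0 := max_eq_left hfeas
  rw [hmax, mul_zero, add_zero]
  set t := g xstar + b * (x - xstar) with ht
  have hmono : max 0 t ≤ max 0 (g x) := max_le_max le_rfl h2
  have hlt : l * t ≤ ρ * max 0 t := by
    rcases le_or_gt 0 t with h | h
    · calc l * t ≤ ρ * t := by nlinarith
        _ ≤ ρ * max 0 t := by
            have := le_max_right (0:ℝ) t
            nlinarith
    · calc l * t ≤ 0 := mul_nonpos_of_nonneg_of_nonpos hl h.le
        _ ≤ ρ * max 0 t := mul_nonneg (by linarith) (le_max_left _ _)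
  have key : l * t = l * b * (x - xstar) := by
    simp only [ht]; ring_nf; nlinarith [hcomp]
  have ha' : a = -(l * b) := by linarith
  have hρ0 : (0:ℝ) ≤ ρ := le_of_lt (lt_of_le_of_lt hl hρ)
  have h3 : ρ * max 0 t ≤ ρ * max 0 (g x) := mul_le_mul_of_nonneg_left hmono hρ0
  have h1' : f xstar - l * t ≤ f x := by
    have : a * (x - xstar) = -(l * t) := by rw [ha', key]; ring
    linarith [h1, this ▸ h1]
  linarith
end
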